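/- Let (x_n)_{n≥1} be a sequence in [0,1) and let 0 < α < 1. Suppose (x_n) has converging number variance for the exponent α, i.e. for every s > 0, lim_{N→∞} (1/N^{2−α}) · #{(l,m) : 1 ≤ l, m ≤ N, l ≠ m, ‖x_l − x_m‖ ≤ s/N^α} = 2s. Then (x_n) is uniformly distributed in [0,1); equivalently, lim_{N→∞} D_N*(x_n) = 0. -/

import Mathlib

open scoped Classical

/-- Distance from `x` to the nearest integer. -/
noncomputable def nint (x : ℝ) : ℝ := ⨅ k : ℤ, |x - (k : ℝ)|

/-- Number of ordered pairs `(l,m)`, `1 ≤ l,m ≤ N`, `l ≠ m`, with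
`‖x_l - x_m‖ ≤ r`. -/
noncomputable def pairCountLe (x : ℕ → ℝ) (N : ℕ) (r : ℝ) : ℕ :=
  (((Finset.Icc 1 N) ×ˢ (Finset.Icc 1 N)).filter
    (fun p => p.1 ≠ p.2 ∧ nint (x p.1 - x p.2) ≤ r)).card

/-- Star-discrepancy of the first `N` points of a sequence in `[0,1)`. -/
noncomputable def starDiscrepancy (N : ℕ) (x : ℕ → ℝ) : ℝ :=
  sSup {v : ℝ | ∃ b : ℝ, 0 < b ∧ b ≤ 1 ∧
    v = |(((Finset.Icc 1 N).filter (fun n => 0 ≤ x n ∧ x n < b)).card : ℝ) / N - b|}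

/-!
Cut `[0, 1)` into `K ≈ N ^ α` cells and group `t` consecutive cells into blocks. Two points whose
cells are `d` apart share `t - d` blocks and are within distance `(r + 1) / K` for each of the
`t - d` values `d ≤ r < t`; so the number variance bounds the sum of the squared block counts by
`≈ (t² + t) N ^ (2 - α)`. By Cauchy–Schwarz the `≈ bK` blocks left of `b` contribute at least
`(t A)² / (bK)`, where `A` counts the points in `[0, b)`, and the `≈ (1 - b) K` blocks right of `b`
at least `(t (N - A))² / ((1 - b) K)`, up to the points in the `t` cells next to `b`, which are
`o(N)` because the pairs closer than `(t + 1) / K` are `O(N ^ (2 - α))`. For every limit point `β`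
of `A / N` this gives `t² (β² / b + (1 - β)² / (1 - b)) ≤ t² + t`, i.e. `t (β - b)² ≤ b (1 - b)`,
for all `t`; hence `β = b`. Monotonicity in `b` makes the convergence uniform.
-/

open Finset Filter Topology

section Blocks

variable {ι : Type*} (S : Finset ι) (u : ι → ℕ) (t : ℕ)

/-- Blocks are indexed by their last cell: block `w` consists of the cells `w + 1 - t, …, w`. -/
noncomputable def blockCount (w : ℕ) : ℕ := #{n ∈ S | w ∈ Ico (u n) (u n + t)}

noncomputable def closePairs (r : ℕ) : Finset (ι × ι) :=
  {p ∈ S ×ˢ S | u p.1 ≤ u p.2 + r ∧ u p.2 ≤ u p.1 + r}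

lemma sum_blockCount_eq (W : Finset ℕ) :
    ∑ w ∈ W, blockCount S u t w = ∑ n ∈ S, #{w ∈ W | w ∈ Ico (u n) (u n + t)} :=
  (sum_card_bipartiteAbove_eq_sum_card_bipartiteBelow (fun n w => w ∈ Ico (u n) (u n + t))).symm

lemma mul_card_le_sum_blockCount {W : Finset ℕ} {T : Finset ι} (hTS : T ⊆ S)
    (hTW : ∀ n ∈ T, Ico (u n) (u n + t) ⊆ W) :
    t * #T ≤ ∑ w ∈ W, blockCount S u t w := by
  rw [sum_blockCount_eq, mul_comm, ← smul_eq_mul, ← sum_const]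
  calc ∑ _ ∈ T, t = ∑ n ∈ T, #{w ∈ W | w ∈ Ico (u n) (u n + t)} := by
        refine sum_congr rfl fun n hn => ?_
        rw [filter_mem_eq_inter, inter_eq_right.2 (hTW n hn), Nat.card_Ico, Nat.add_sub_cancel_left]
    _ ≤ _ := sum_le_sum_of_subset hTS

lemma blockCount_sq (w : ℕ) :
    blockCount S u t w ^ 2 =
      #{p ∈ S ×ˢ S | w ∈ Ico (u p.1) (u p.1 + t) ∧ w ∈ Ico (u p.2) (u p.2 + t)} := by
  rw [sq, blockCount, ← card_product, ← filter_product]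

lemma card_common_blocks_le (a b : ℕ) (W : Finset ℕ) :
    #{w ∈ W | w ∈ Ico a (a + t) ∧ w ∈ Ico b (b + t)} ≤ #{r ∈ range t | a ≤ b + r ∧ b ≤ a + r} := by
  refine card_le_card_of_injOn (fun w => w - min a b) (fun w hw => ?_) (fun w hw w' hw' h => ?_)
  · simp only [coe_filter, mem_Ico, Set.mem_ofPred_eq, mem_range] at hw ⊢
    omega
  · simp only [coe_filter, mem_Ico, Set.mem_ofPred_eq] at hw hw' h
    omega

lemma sum_blockCount_sq_le (W : Finset ℕ) :
    ∑ w ∈ W, blockCount S u t w ^ 2 ≤ ∑ r ∈ range t, #(closePairs S u r) := by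
  simp only [blockCount_sq]
  calc _ = ∑ p ∈ S ×ˢ S, #{w ∈ W | w ∈ Ico (u p.1) (u p.1 + t) ∧ w ∈ Ico (u p.2) (u p.2 + t)} :=
        (sum_card_bipartiteAbove_eq_sum_card_bipartiteBelow _).symm
    _ ≤ ∑ p ∈ S ×ˢ S, #{r ∈ range t | u p.1 ≤ u p.2 + r ∧ u p.2 ≤ u p.1 + r} :=
        sum_le_sum fun p _ => card_common_blocks_le t (u p.1) (u p.2) W
    _ = _ := sum_card_bipartiteAbove_eq_sum_card_bipartiteBelow _

lemma card_sq_le_card_closePairs (p r : ℕ) :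
    #{n ∈ S | u n ∈ Icc p (p + r)} ^ 2 ≤ #(closePairs S u r) := by
  rw [sq, ← card_product]
  refine card_le_card fun q hq => ?_
  simp only [mem_product, mem_filter, mem_Icc, closePairs] at hq ⊢
  exact ⟨⟨hq.1.1, hq.2.1⟩, by omega, by omega⟩

lemma sq_div_card_le_sum_blockCount_sq {W : Finset ℕ} {T : Finset ι} (hTS : T ⊆ S)
    (hTW : ∀ n ∈ T, Ico (u n) (u n + t) ⊆ W) :
    ((t : ℝ) * #T) ^ 2 / #W ≤ ∑ w ∈ W, (blockCount S u t w : ℝ) ^ 2 := by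
  calc _ ≤ (∑ w ∈ W, (blockCount S u t w : ℝ)) ^ 2 / #W := by
        gcongr; exact_mod_cast mul_card_le_sum_blockCount S u t hTS hTW
    _ ≤ _ := by simpa using pow_sum_div_card_le_sum_pow (fun w _ => Nat.cast_nonneg _) 1

lemma sq_div_card_add_sq_div_card_le {W₁ W₂ : Finset ℕ} {T₁ T₂ : Finset ι} (hW : Disjoint W₁ W₂)
    (hT₁S : T₁ ⊆ S) (hT₂S : T₂ ⊆ S) (hT₁W : ∀ n ∈ T₁, Ico (u n) (u n + t) ⊆ W₁)
    (hT₂W : ∀ n ∈ T₂, Ico (u n) (u n + t) ⊆ W₂) :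
    ((t : ℝ) * #T₁) ^ 2 / #W₁ + ((t : ℝ) * #T₂) ^ 2 / #W₂ ≤
      ∑ r ∈ range t, (#(closePairs S u r) : ℝ) := by
  calc _ ≤ ∑ w ∈ W₁ ∪ W₂, (blockCount S u t w : ℝ) ^ 2 := by
        rw [sum_union hW]
        exact add_le_add (sq_div_card_le_sum_blockCount_sq S u t hT₁S hT₁W)
          (sq_div_card_le_sum_blockCount_sq S u t hT₂S hT₂W)
    _ ≤ _ := by exact_mod_cast sum_blockCount_sq_le S u t _

end Blocks

section Cells

noncomputable def cell (K : ℕ) (y : ℝ) : ℕ := ⌊y * K⌋₊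

variable {K : ℕ}

lemma cell_mono : Monotone (cell K) :=
  fun _ _ h => Nat.floor_le_floor (mul_le_mul_of_nonneg_right h K.cast_nonneg)

lemma cell_lt (hK : 0 < K) {y : ℝ} (hy : y < 1) : cell K y < K :=
  (Nat.floor_lt' hK.ne').2 (by nlinarith [(Nat.cast_pos (α := ℝ)).2 hK])

lemma cell_le {y : ℝ} (hy : y ≤ 1) : cell K y ≤ K :=
  Nat.floor_le_of_le (by nlinarith [K.cast_nonneg (α := ℝ)])

lemma sub_lt_of_cell_le_add (hK : 0 < K) {y z : ℝ} (hz : 0 ≤ z) {r : ℕ}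
    (h : cell K y ≤ cell K z + r) : y - z < (r + 1) / K := by
  have hK' : (0 : ℝ) < K := Nat.cast_pos.2 hK
  have h' : (cell K y : ℝ) ≤ cell K z + r := by exact_mod_cast h
  have hy := Nat.lt_floor_add_one (y * K)
  have hz' := Nat.floor_le (mul_nonneg hz hK'.le)
  rw [lt_div_iff₀ hK']
  unfold cell at h'
  linarith

end Cells

section PairCounts

lemma nint_le_abs (z : ℝ) : nint z ≤ |z| := by
  have hbdd : BddBelow (Set.range fun k : ℤ => |z - k|) := ⟨0, by rintro _ ⟨k, rfl⟩; positivity⟩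
  calc nint z ≤ |z - ((0 : ℤ) : ℝ)| := ciInf_le hbdd 0
    _ = |z| := by simp

lemma pairCountLe_mono (x : ℕ → ℝ) (N : ℕ) : Monotone (pairCountLe x N) :=
  fun _ _ h => card_le_card <| monotone_filter_right _ fun _ _ hp => ⟨hp.1, hp.2.trans h⟩

lemma card_closePairs_cell_le (x : ℕ → ℝ) (hx : ∀ n, 0 ≤ x n) {K : ℕ} (hK : 0 < K) (N r : ℕ) :
    #(closePairs (Icc 1 N) (fun n => cell K (x n)) r) ≤ pairCountLe x N ((r + 1) / K) + N := by
  have hsub : closePairs (Icc 1 N) (fun n => cell K (x n)) r ⊆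
      {p ∈ Icc 1 N ×ˢ Icc 1 N | p.1 ≠ p.2 ∧ nint (x p.1 - x p.2) ≤ (r + 1) / K} ∪
        (Icc 1 N).diag := by
    rintro ⟨l, m⟩ hp
    simp only [closePairs, mem_filter] at hp
    by_cases hlm : l = m
    · exact mem_union_right _ (mem_diag.2 ⟨(mem_product.1 hp.1).1, hlm⟩)
    refine mem_union_left _ (mem_filter.2 ⟨hp.1, hlm, (nint_le_abs _).trans ?_⟩)
    exact abs_sub_le_iff.2 ⟨(sub_lt_of_cell_le_add hK (hx m) hp.2.1).le,
      (sub_lt_of_cell_le_add hK (hx l) hp.2.2).le⟩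
  calc _ ≤ _ := card_le_card hsub
    _ ≤ _ := card_union_le _ _
    _ = _ := by rw [diag_card, Nat.card_Icc, Nat.add_sub_cancel]; rfl

end PairCounts

section Counting

noncomputable def countLt (x : ℕ → ℝ) (N : ℕ) (b : ℝ) : ℕ := #{n ∈ Icc 1 N | 0 ≤ x n ∧ x n < b}

lemma countLt_le (x : ℕ → ℝ) (N : ℕ) (b : ℝ) : countLt x N b ≤ N :=
  (card_filter_le _ _).trans (by simp)

lemma monotone_countLt (x : ℕ → ℝ) (N : ℕ) : Monotone (countLt x N) :=
  fun _ _ h => card_le_card <| monotone_filter_right _ fun _ _ hn => ⟨hn.1, hn.2.trans_le h⟩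

variable {x : ℕ → ℝ} {K : ℕ} (N t : ℕ) {b : ℝ}

/-- Every block containing a point left of `b` ends in one of the first `cell K b + t` cells,
every block containing a point at least `t` cells right of `b` in one of the remaining ones. -/
lemma sq_countLt_div_add_le (hx : ∀ n, x n ∈ Set.Ico 0 1) (hK : 0 < K) (hb : b ≤ 1) :
    ((t : ℝ) * countLt x N b) ^ 2 / (cell K b + t) +
      ((t : ℝ) * #{n ∈ Icc 1 N | cell K b + t ≤ cell K (x n)}) ^ 2 / (K - cell K b) ≤
    ∑ r ∈ range t, ((pairCountLe x N ((r + 1) / K) : ℝ) + N) := by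
  have key := sq_div_card_add_sq_div_card_le (Icc 1 N) (fun n => cell K (x n)) t
    (W₁ := range (cell K b + t)) (W₂ := Ico (cell K b + t) (K + t))
    (T₁ := {n ∈ Icc 1 N | 0 ≤ x n ∧ x n < b})
    (T₂ := {n ∈ Icc 1 N | cell K b + t ≤ cell K (x n)})
    (range_eq_Ico _ ▸ Ico_disjoint_Ico_consecutive _ _ _) (filter_subset _ _) (filter_subset _ _)
    (fun n hn w hw => by
      have := cell_mono (K := K) (mem_filter.1 hn).2.2.le
      simp only [mem_Ico, mem_range] at hw ⊢
      omega)
    (fun n hn w hw => by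
      have := cell_lt hK (hx n).2
      have := (mem_filter.1 hn).2
      simp only [mem_Ico] at hw ⊢
      omega)
  rw [card_range, Nat.card_Ico, Nat.add_sub_add_right, Nat.cast_sub (cell_le hb)] at key
  push_cast at key
  refine key.trans (sum_le_sum fun r _ => ?_)
  exact_mod_cast (card_closePairs_cell_le x (fun n => (hx n).1) hK N r)

lemma le_countLt_add_card_add_card (hx : ∀ n, 0 ≤ x n) :
    N ≤ countLt x N b + #{n ∈ Icc 1 N | cell K b + t ≤ cell K (x n)} +
      #{n ∈ Icc 1 N | cell K (x n) ∈ Icc (cell K b) (cell K b + t)} := by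
  calc N = #(Icc 1 N) := by simp
    _ ≤ #({n ∈ Icc 1 N | 0 ≤ x n ∧ x n < b} ∪ {n ∈ Icc 1 N | cell K b + t ≤ cell K (x n)} ∪
          {n ∈ Icc 1 N | cell K (x n) ∈ Icc (cell K b) (cell K b + t)}) := by
        refine card_le_card fun n hn => ?_
        simp only [mem_union, mem_filter, hn, hx n, true_and, Finset.mem_Icc]
        by_cases hnb : x n < b
        · exact Or.inl (Or.inl hnb)
        · have := cell_mono (K := K) (not_lt.1 hnb)
          omega
    _ ≤ _ := (card_union_le _ _).trans (Nat.add_le_add_right (card_union_le _ _) _)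

lemma countLt_add_card_le (ht : 1 ≤ t) :
    countLt x N b + #{n ∈ Icc 1 N | cell K b + t ≤ cell K (x n)} ≤ N := by
  calc _ ≤ countLt x N b + #{n ∈ Icc 1 N | ¬(0 ≤ x n ∧ x n < b)} := by
        refine Nat.add_le_add_left (card_le_card (monotone_filter_right _ ?_)) _
        intro n _ hn hnb
        have := cell_mono (K := K) hnb.2.le
        omega
    _ = N := by rw [countLt, card_filter_add_card_filter_not, Nat.card_Icc, Nat.add_sub_cancel]

lemma card_cell_mem_Icc_sq_le (hx : ∀ n, 0 ≤ x n) (hK : 0 < K) (p r : ℕ) :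
    #{n ∈ Icc 1 N | cell K (x n) ∈ Icc p (p + r)} ^ 2 ≤ pairCountLe x N ((r + 1) / K) + N :=
  (card_sq_le_card_closePairs _ _ p r).trans (card_closePairs_cell_le x hx hK N r)

end Counting

section Asymptotics

def HasConvergingNumberVariance (x : ℕ → ℝ) (α : ℝ) : Prop :=
  ∀ s : ℝ, 0 < s → Tendsto
    (fun N : ℕ => (pairCountLe x N (s / (N : ℝ) ^ α) : ℝ) / (N : ℝ) ^ ((2 : ℝ) - α))
    atTop (𝓝 (2 * s))

noncomputable def numCells (α : ℝ) (N : ℕ) : ℕ := ⌈(N : ℝ) ^ α⌉₊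

variable {x : ℕ → ℝ} {α : ℝ}

lemma tendsto_natCast_rpow_atTop (hα : 0 < α) : Tendsto (fun N : ℕ => (N : ℝ) ^ α) atTop atTop :=
  (tendsto_rpow_atTop hα).comp tendsto_natCast_atTop_atTop

lemma tendsto_cell_numCells_div (hα : 0 < α) {c : ℝ} (hc : 0 ≤ c) :
    Tendsto (fun N => (cell (numCells α N) c : ℝ) / (N : ℝ) ^ α) atTop (𝓝 c) := by
  have hceil : Tendsto (fun y : ℝ => (⌈y⌉₊ : ℝ)) atTop atTop :=
    tendsto_natCast_atTop_atTop.comp (tendsto_nat_ceil_atTop)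
  have hlim : Tendsto (fun y : ℝ => (⌊c * ⌈y⌉₊⌋₊ : ℝ) / ⌈y⌉₊ * ((⌈y⌉₊ : ℝ) / y)) atTop (𝓝 c) := by
    simpa using ((tendsto_nat_floor_mul_div_atTop hc).comp hceil).mul tendsto_nat_ceil_div_atTop
  refine Tendsto.congr' ?_ (hlim.comp (tendsto_natCast_rpow_atTop hα))
  filter_upwards [(tendsto_natCast_rpow_atTop hα).eventually_gt_atTop 0] with N hN
  simp only [Function.comp_apply]
  rw [div_mul_div_cancel₀ (Nat.cast_ne_zero.2 (Nat.ceil_pos.2 hN).ne')]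
  rfl

lemma numCells_pos {N : ℕ} (hN : 1 ≤ N) : 0 < numCells α N :=
  Nat.ceil_pos.2 (Real.rpow_pos_of_pos (by exact_mod_cast hN) α)

lemma tendsto_natCast_div_rpow_two_sub (hα : α < 1) :
    Tendsto (fun N : ℕ => (N : ℝ) / (N : ℝ) ^ ((2 : ℝ) - α)) atTop (𝓝 0) := by
  refine ((tendsto_rpow_neg_atTop (sub_pos.2 hα)).comp tendsto_natCast_atTop_atTop).congr' ?_
  filter_upwards [eventually_gt_atTop 0] with N hN
  have hN' : (0 : ℝ) < N := by exact_mod_cast hN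
  simp only [Function.comp_apply]
  rw [show -(1 - α) = 1 - (2 - α) by ring, Real.rpow_sub hN', Real.rpow_one]

lemma HasConvergingNumberVariance.tendsto_div_sq (hnv : HasConvergingNumberVariance x α)
    (hα : 0 < α) {s : ℝ} (hs : 0 < s) :
    Tendsto (fun N : ℕ => (pairCountLe x N (s / (N : ℝ) ^ α) : ℝ) / (N : ℝ) ^ 2) atTop (𝓝 0) := by
  have hlim := (hnv s hs).mul (tendsto_natCast_rpow_atTop hα).inv_tendsto_atTop
  rw [mul_zero] at hlim
  refine hlim.congr' ?_
  filter_upwards [eventually_gt_atTop 0] with N hN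
  have hN' : (0 : ℝ) < N := by exact_mod_cast hN
  rw [Pi.inv_apply, Real.rpow_sub hN', Real.rpow_two]
  field_simp

lemma HasConvergingNumberVariance.tendsto_sum_div (hnv : HasConvergingNumberVariance x α)
    (hα : α < 1) (t : ℕ) :
    Tendsto (fun N : ℕ => (∑ r ∈ range t, ((pairCountLe x N ((r + 1) / (N : ℝ) ^ α) : ℝ) + N)) /
      (N : ℝ) ^ ((2 : ℝ) - α)) atTop (𝓝 ((t : ℝ) ^ 2 + t)) := by
  have hsum : ∑ r ∈ range t, (2 * ((r : ℝ) + 1) + 0) = (t : ℝ) ^ 2 + t := by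
    induction t with
    | zero => simp
    | succ t ih => rw [sum_range_succ, ih]; push_cast; ring
  have hlim := tendsto_finsetSum (range t) fun r _ =>
    (hnv ((r : ℝ) + 1) (by positivity)).add (tendsto_natCast_div_rpow_two_sub hα)
  rw [hsum] at hlim
  exact hlim.congr fun N => by simp only [sum_div, add_div]

lemma tendsto_div_of_sq_le {E : ℕ → ℕ} {P : ℕ → ℝ}
    (hP : Tendsto (fun N => P N / (N : ℝ) ^ 2) atTop (𝓝 0))
    (hE : ∀ᶠ N in atTop, (E N : ℝ) ^ 2 ≤ P N + N) :
    Tendsto (fun N => (E N : ℝ) / N) atTop (𝓝 0) := by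
  have hbound : Tendsto (fun N : ℕ => √(P N / (N : ℝ) ^ 2 + (N : ℝ)⁻¹)) atTop (𝓝 0) := by
    simpa using (hP.add tendsto_inv_atTop_nhds_zero_nat).sqrt
  refine tendsto_of_tendsto_of_tendsto_of_le_of_le' tendsto_const_nhds hbound
    (Eventually.of_forall fun N => by positivity) ?_
  filter_upwards [hE, eventually_gt_atTop 0] with N hEN hN
  have hN' : (0 : ℝ) < N := by exact_mod_cast hN
  refine Real.le_sqrt_of_sq_le ?_
  calc ((E N : ℝ) / N) ^ 2 ≤ (P N + N) / (N : ℝ) ^ 2 := by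
        rw [div_pow]; gcongr
    _ = _ := by field_simp

end Asymptotics

section LimitPoints

variable {x : ℕ → ℝ} {α b : ℝ}

lemma eventually_normalized_block_le (hx : ∀ n, x n ∈ Set.Ico 0 1) (hb : b ≤ 1) (t : ℕ) :
    ∀ᶠ N : ℕ in atTop,
      (t : ℝ) ^ 2 * ((countLt x N b : ℝ) / N) ^ 2 *
          ((N : ℝ) ^ α / (cell (numCells α N) b + t)) +
        (t : ℝ) ^ 2 *
          ((#{n ∈ Icc 1 N | cell (numCells α N) b + t ≤ cell (numCells α N) (x n)} : ℝ) / N) ^ 2 *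
          ((N : ℝ) ^ α / (numCells α N - cell (numCells α N) b)) ≤
      (∑ r ∈ range t, ((pairCountLe x N ((r + 1) / (N : ℝ) ^ α) : ℝ) + N)) /
        (N : ℝ) ^ ((2 : ℝ) - α) := by
  filter_upwards [eventually_ge_atTop 1] with N hN
  have hN' : (0 : ℝ) < N := by exact_mod_cast hN
  set K := numCells α N
  have hNK : (N : ℝ) ^ α ≤ K := Nat.le_ceil _
  calc _ = (((t : ℝ) * countLt x N b) ^ 2 / (cell K b + t) +
        ((t : ℝ) * #{n ∈ Icc 1 N | cell K b + t ≤ cell K (x n)}) ^ 2 / (K - cell K b)) /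
          (N : ℝ) ^ ((2 : ℝ) - α) := by
        rw [Real.rpow_sub hN', Real.rpow_two, div_div_eq_mul_div]
        ring
    _ ≤ (∑ r ∈ range t, ((pairCountLe x N ((r + 1) / K) : ℝ) + N)) /
          (N : ℝ) ^ ((2 : ℝ) - α) := by
        gcongr
        exact sq_countLt_div_add_le N t hx (numCells_pos hN) hb
    _ ≤ _ := by
        gcongr with r
        exact pairCountLe_mono _ _ (div_le_div_of_nonneg_left (by positivity) (by positivity) hNK)

lemma HasConvergingNumberVariance.tendsto_card_cell_mem_Icc_div
    (hnv : HasConvergingNumberVariance x α) (hx : ∀ n, 0 ≤ x n) (hα : 0 < α) (p : ℕ → ℕ)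
    (t : ℕ) :
    Tendsto (fun N => (#{n ∈ Icc 1 N | cell (numCells α N) (x n) ∈ Icc (p N) (p N + t)} : ℝ) / N)
      atTop (𝓝 0) := by
  refine tendsto_div_of_sq_le (hnv.tendsto_div_sq hα (s := t + 1) (by positivity)) ?_
  filter_upwards [eventually_ge_atTop 1] with N hN
  have hNK : (N : ℝ) ^ α ≤ numCells α N := Nat.le_ceil _
  have hP := pairCountLe_mono x N
    (div_le_div_of_nonneg_left (by positivity) (by positivity) hNK : ((t : ℝ) + 1) / _ ≤ _)
  exact_mod_cast (card_cell_mem_Icc_sq_le N hx (numCells_pos hN) _ t).trans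
    (Nat.add_le_add_right hP N)

lemma tendsto_rpow_div_cell_add (hα : 0 < α) (hb : 0 < b) (t : ℝ) :
    Tendsto (fun N : ℕ => (N : ℝ) ^ α / (cell (numCells α N) b + t)) atTop (𝓝 b⁻¹) := by
  have h := ((tendsto_cell_numCells_div hα hb.le).add
    (tendsto_const_nhds (x := t).div_atTop (tendsto_natCast_rpow_atTop hα))).inv₀
    (by simpa using hb.ne')
  simpa only [add_zero, ← add_div, inv_div] using h

lemma tendsto_rpow_div_numCells_sub_cell (hα : 0 < α) (hb0 : 0 ≤ b) (hb1 : b < 1) :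
    Tendsto (fun N : ℕ => (N : ℝ) ^ α / (numCells α N - cell (numCells α N) b)) atTop
      (𝓝 (1 - b)⁻¹) := by
  have hK := tendsto_cell_numCells_div (α := α) hα zero_le_one
  simp only [cell, one_mul, Nat.floor_natCast] at hK
  have h := (hK.sub (tendsto_cell_numCells_div hα hb0)).inv₀ (sub_ne_zero.2 hb1.ne')
  simpa only [← sub_div, inv_div] using h

lemma HasConvergingNumberVariance.sq_mul_le_of_tendsto (hnv : HasConvergingNumberVariance x α)
    (hx : ∀ n, x n ∈ Set.Ico 0 1) (hα0 : 0 < α) (hα1 : α < 1) (hb0 : 0 < b) (hb1 : b < 1)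
    {t : ℕ} (ht : 1 ≤ t) {σ : ℕ → ℕ} (hσ : Tendsto σ atTop atTop) {β : ℝ}
    (hβ : Tendsto (fun j => (countLt x (σ j) b : ℝ) / σ j) atTop (𝓝 β)) :
    (t : ℝ) ^ 2 * (β ^ 2 / b + (1 - β) ^ 2 / (1 - b)) ≤ t ^ 2 + t := by
  set K := numCells α
  set T := fun N => #{n ∈ Icc 1 N | cell (K N) b + t ≤ cell (K N) (x n)}
  set E := fun N => #{n ∈ Icc 1 N | cell (K N) (x n) ∈ Icc (cell (K N) b) (cell (K N) b + t)}
  have hE : Tendsto (fun N => (E N : ℝ) / N) atTop (𝓝 0) :=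
    hnv.tendsto_card_cell_mem_Icc_div (fun n => (hx n).1) hα0 _ t
  have hT : Tendsto (fun j => (T (σ j) : ℝ) / σ j) atTop (𝓝 (1 - β)) := by
    have hlow : Tendsto (fun j => 1 - (countLt x (σ j) b : ℝ) / σ j - (E (σ j) : ℝ) / σ j)
        atTop (𝓝 (1 - β)) := by
      simpa using (tendsto_const_nhds.sub hβ).sub (hE.comp hσ)
    refine tendsto_of_tendsto_of_tendsto_of_le_of_le' hlow (tendsto_const_nhds.sub hβ) ?_ ?_
      <;> filter_upwards [hσ.eventually_ge_atTop 1] with j hj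
      <;> have hj' : (0 : ℝ) < σ j := by exact_mod_cast hj
    · have := le_countLt_add_card_add_card (K := K (σ j)) (b := b) (σ j) t (fun n => (hx n).1)
      have : (σ j : ℝ) ≤ countLt x (σ j) b + T (σ j) + E (σ j) := by exact_mod_cast this
      rw [show (1 : ℝ) - countLt x (σ j) b / σ j - E (σ j) / σ j =
        (σ j - countLt x (σ j) b - E (σ j)) / σ j by field_simp]
      gcongr
      linarith
    · have := countLt_add_card_le (x := x) (K := K (σ j)) (b := b) (σ j) t ht
      have : (countLt x (σ j) b : ℝ) + T (σ j) ≤ σ j := by exact_mod_cast this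
      rw [show (1 : ℝ) - countLt x (σ j) b / σ j = (σ j - countLt x (σ j) b) / σ j by field_simp]
      gcongr
      linarith
  have hleft := ((tendsto_const_nhds (x := (t : ℝ) ^ 2)).mul (hβ.pow 2)).mul
    ((tendsto_rpow_div_cell_add hα0 hb0 t).comp hσ)
  have hright := ((tendsto_const_nhds (x := (t : ℝ) ^ 2)).mul (hT.pow 2)).mul
    ((tendsto_rpow_div_numCells_sub_cell hα0 hb0.le hb1).comp hσ)
  calc _ = (t : ℝ) ^ 2 * β ^ 2 * b⁻¹ + (t : ℝ) ^ 2 * (1 - β) ^ 2 * (1 - b)⁻¹ := by ring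
    _ ≤ _ := le_of_tendsto_of_tendsto (hleft.add hright) ((hnv.tendsto_sum_div hα1 t).comp hσ)
        (hσ.eventually (eventually_normalized_block_le hx hb1.le t))

end LimitPoints

section UniformDistribution

variable {x : ℕ → ℝ} {α : ℝ}

lemma eq_of_forall_sq_mul_le {b β : ℝ} (hb0 : 0 < b) (hb1 : b < 1)
    (h : ∀ t : ℕ, 1 ≤ t → (t : ℝ) ^ 2 * (β ^ 2 / b + (1 - β) ^ 2 / (1 - b)) ≤ t ^ 2 + t) :
    β = b := by
  have hb : 0 < b * (1 - b) := mul_pos hb0 (sub_pos.2 hb1)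
  have key : ∀ t : ℕ, 1 ≤ t → (t : ℝ) * (β - b) ^ 2 ≤ b * (1 - b) := fun t ht => by
    have ht' : (0 : ℝ) < t := by exact_mod_cast ht
    have h' := h t ht
    rw [show β ^ 2 / b + (1 - β) ^ 2 / (1 - b) = 1 + (β - b) ^ 2 / (b * (1 - b)) by
      field_simp [(sub_pos.2 hb1).ne']; ring, mul_add, mul_one, add_le_add_iff_left,
      mul_div_assoc', div_le_iff₀ hb] at h'
    nlinarith
  by_contra hne
  have hpos : 0 < (β - b) ^ 2 := by positivity [sub_ne_zero.2 hne]
  obtain ⟨t, ht⟩ := exists_nat_gt (b * (1 - b) / (β - b) ^ 2 + 1)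
  have := key t (by exact_mod_cast (by linarith [div_pos hb hpos] : (1 : ℝ) ≤ t))
  rw [← le_div_iff₀ hpos] at this
  linarith

lemma HasConvergingNumberVariance.tendsto_countLt_div (hnv : HasConvergingNumberVariance x α)
    (hx : ∀ n, x n ∈ Set.Ico 0 1) (hα0 : 0 < α) (hα1 : α < 1) {b : ℝ} (hb : b ∈ Set.Icc 0 1) :
    Tendsto (fun N => (countLt x N b : ℝ) / N) atTop (𝓝 b) := by
  rcases hb.1.eq_or_lt with rfl | hb0
  · have h0 (N : ℕ) : countLt x N 0 = 0 :=
      card_eq_zero.2 (filter_eq_empty_iff.2 fun n _ hn => hn.1.not_gt hn.2)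
    simp [h0]
  rcases hb.2.eq_or_lt with rfl | hb1
  · refine tendsto_const_nhds.congr' ?_
    filter_upwards [eventually_ge_atTop 1] with N hN
    rw [countLt, filter_true_of_mem fun n _ => ⟨(hx n).1, (hx n).2⟩, Nat.card_Icc,
      Nat.add_sub_cancel, div_self (by positivity)]
  refine isCompact_Icc.tendsto_nhds_of_unique_mapClusterPt (Eventually.of_forall fun N =>
    ⟨by positivity, div_le_one_of_le₀ (by exact_mod_cast countLt_le x N b) N.cast_nonneg⟩)
    fun β _ hβ => ?_
  obtain ⟨σ, hσ, hσβ⟩ := hβ.tendsto_subseq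
  exact eq_of_forall_sq_mul_le hb0 hb1 fun t ht =>
    hnv.sq_mul_le_of_tendsto hx hα0 hα1 hb0 hb1 ht hσ.tendsto_atTop hσβ

lemma eventually_forall_abs_sub_le {F : ℕ → ℝ → ℝ} (hF : ∀ N, Monotone (F N))
    (hlim : ∀ b ∈ Set.Icc (0 : ℝ) 1, Tendsto (fun N => F N b) atTop (𝓝 b)) {ε : ℝ}
    (hε : 0 < ε) : ∀ᶠ N in atTop, ∀ b ∈ Set.Icc (0 : ℝ) 1, |F N b - b| ≤ ε := by
  obtain ⟨M, hM⟩ := exists_nat_gt (2 / ε)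
  have hM0 : (0 : ℝ) < M := (div_pos two_pos hε).trans hM
  have hMε : 1 / (M : ℝ) < ε / 2 := by
    rw [div_lt_iff₀ hM0]; rw [div_lt_iff₀ hε] at hM; linarith
  have hgrid : ∀ᶠ N in atTop, ∀ j ∈ range (M + 1), |F N (j / M) - j / M| < ε / 2 := by
    refine (eventually_all_finset _).2 fun j hj => ?_
    have hjM : (j : ℝ) ≤ M := by exact_mod_cast Nat.lt_succ_iff.1 (mem_range.1 hj)
    exact (Metric.tendsto_nhds.1 (hlim _ ⟨by positivity, div_le_one_of_le₀ hjM hM0.le⟩) _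
      (half_pos hε)).mono fun N hN => hN
  filter_upwards [hgrid] with N hN b hb
  have hbM : 0 ≤ b * M := mul_nonneg hb.1 hM0.le
  have hbM' : b * M ≤ M := by nlinarith [hb.2]
  have hceil : ⌈b * M⌉₊ ∈ range (M + 1) := mem_range.2 (Nat.lt_succ_of_le (Nat.ceil_le.2 hbM'))
  have hfloor : ⌊b * M⌋₊ ∈ range (M + 1) :=
    mem_range.2 (Nat.lt_succ_of_le (Nat.floor_le_of_le hbM'))
  have hup : b ≤ ⌈b * M⌉₊ / M := by rw [le_div_iff₀ hM0]; exact Nat.le_ceil _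
  have hlow : (⌊b * M⌋₊ : ℝ) / M ≤ b := by rw [div_le_iff₀ hM0]; exact Nat.floor_le hbM
  have hgap : (⌈b * M⌉₊ : ℝ) / M ≤ ⌊b * M⌋₊ / M + 1 / M := by
    rw [← add_div]
    gcongr
    exact_mod_cast Nat.ceil_le_floor_add_one _
  have h₁ := abs_lt.1 (hN _ hceil)
  have h₂ := abs_lt.1 (hN _ hfloor)
  have h₃ := hF N hup
  have h₄ := hF N hlow
  exact abs_le.2 ⟨by linarith, by linarith⟩

lemma starDiscrepancy_nonneg (N : ℕ) (x : ℕ → ℝ) : 0 ≤ starDiscrepancy N x :=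
  Real.sSup_nonneg (by rintro _ ⟨b, -, -, rfl⟩; exact abs_nonneg _)

lemma starDiscrepancy_le {N : ℕ} {ε : ℝ} (hε : 0 ≤ ε)
    (h : ∀ b : ℝ, 0 < b → b ≤ 1 → |(countLt x N b : ℝ) / N - b| ≤ ε) :
    starDiscrepancy N x ≤ ε :=
  Real.sSup_le (by rintro _ ⟨b, hb0, hb1, rfl⟩; exact h b hb0 hb1) hε

end UniformDistribution

theorem stmt5 (x : ℕ → ℝ) (hx : ∀ n, x n ∈ Set.Ico (0 : ℝ) 1)
    (α : ℝ) (hα0 : 0 < α) (hα1 : α < 1)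
    (hnv : ∀ s : ℝ, 0 < s → Filter.Tendsto
      (fun N : ℕ => (pairCountLe x N (s / (N : ℝ) ^ α) : ℝ) / (N : ℝ) ^ ((2 : ℝ) - α))
      Filter.atTop (nhds (2 * s))) :
    Filter.Tendsto (fun N : ℕ => starDiscrepancy N x) Filter.atTop (nhds 0) := by
  have hmono : ∀ N, Monotone fun b => (countLt x N b : ℝ) / N := fun N _ _ h =>
    div_le_div_of_nonneg_right (by exact_mod_cast monotone_countLt x N h) N.cast_nonneg
  have hconv (b : ℝ) (hb : b ∈ Set.Icc (0 : ℝ) 1) :=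
    HasConvergingNumberVariance.tendsto_countLt_div hnv hx hα0 hα1 hb
  refine tendsto_order.2 ⟨fun a ha => Eventually.of_forall fun N =>
    ha.trans_le (starDiscrepancy_nonneg N x), fun a ha => ?_⟩
  filter_upwards [eventually_forall_abs_sub_le hmono hconv (half_pos ha)] with N hN
  exact (starDiscrepancy_le (half_pos ha).le fun b hb0 hb1 => hN b ⟨hb0.le, hb1⟩).trans_lt
    (half_lt_self ha)
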